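/- arXiv:2201.13375 — 2 statements merged into one kernel-verified Lean document; each statement's English description precedes it below -/
import Mathlib

section
/- Let n ≥ 1 and let M ∈ ℝ^{n×n} be Metzler and Hurwitz stable, and define H(iω) := eₙᵀ(iωI − M)⁻¹eₙ ∈ ℂ for ω ∈ ℝ (with M viewed as a complex matrix). Then: (a) for every ω ∈ ℝ, the matrix iωI − M is invertible and Re[H(iω)] > 0; and (b) lim_{ω→∞} ω² · Re[H(iω)] = −M_{nn} > 0. (In other words, the transfer function eₙᵀ(sI − M)⁻¹eₙ is strictly positive real.) -/
/-!
Deforming `-1` into `M` through the Metzler matrices `t • M - (1 - t) • 1`, which stay invertible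
by Hurwitz stability, the solution of `(t • M - (1 - t) • 1) ξ = -1` can never reach the boundary
of the positive orthant, so it yields `ξ > 0` with `M ξ < 0`; doing the same for `Mᵀ` yields
`ζ > 0` with `Mᵀ ζ < 0`, and then `D = diag (ζ / ξ)` makes `x ↦ xᵀ D M x` negative definite.
For `y = (iωI - M)⁻¹ eₙ`, the real part of `y* D (iωI - M) y = Dₙₙ ȳₙ` reads
`Dₙₙ Re yₙ = -Re (y* D M y) > 0`. With `D = 1` the same identity gives
`ω² Re H(iω) = -Re (v* M v)` for `v = ω y = (iI - ω⁻¹ M)⁻¹ eₙ`, and `v → -i eₙ` as `ω → ∞`.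
-/

open Matrix Filter Topology

/-- A real square matrix is Metzler if all its off-diagonal entries are nonnegative. -/
def Metzler {m : Type*} [Fintype m] (M : Matrix m m ℝ) : Prop :=
  ∀ i j, i ≠ j → 0 ≤ M i j

/-- A real square matrix is Hurwitz stable if all its (complex) eigenvalues have
negative real part. -/
def HurwitzStable {m : Type*} [Fintype m] [DecidableEq m] (M : Matrix m m ℝ) : Prop :=
  ∀ z ∈ spectrum ℂ (M.map Complex.ofReal), z.re < 0

variable {m : Type*} [Fintype m]

theorem continuousAt_matrix_inv_of_det_ne_zero {𝕜 : Type*} [Field 𝕜] [TopologicalSpace 𝕜]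
    [IsTopologicalRing 𝕜] [ContinuousInv₀ 𝕜] [DecidableEq m] (A : Matrix m m 𝕜) (h : A.det ≠ 0) :
    ContinuousAt Inv.inv A :=
  continuousAt_matrix_inv A (by rw [Ring.inverse_eq_inv']; exact continuousAt_inv₀ h)

namespace Metzler

variable {M : Matrix m m ℝ}

theorem transpose (hM : Metzler M) : Metzler Mᵀ := fun i j hij => hM j i hij.symm

theorem smul_sub_smul_one [DecidableEq m] (hM : Metzler M) {t : ℝ} (ht : 0 ≤ t) (s : ℝ) :
    Metzler (t • M - s • 1) := fun i j hij => by
  simpa [one_apply_ne hij] using mul_nonneg ht (hM i j hij)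

theorem diag_mul_le_mulVec (hM : Metzler M) {x : m → ℝ} (hx : ∀ j, 0 ≤ x j) (i : m) :
    M i i * x i ≤ (M *ᵥ x) i := by
  classical
  rw [mulVec, dotProduct, ← Finset.add_sum_erase _ _ (Finset.mem_univ i), le_add_iff_nonneg_right]
  exact Finset.sum_nonneg fun j hj => mul_nonneg (hM i j (Finset.ne_of_mem_erase hj).symm) (hx j)

theorem pos_of_mulVec_neg (hM : Metzler M) {x : m → ℝ} (hx : ∀ j, 0 ≤ x j) {i : m}
    (hi : (M *ᵥ x) i < 0) : 0 < x i := by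
  refine (hx i).lt_of_ne fun h => ?_
  have := hM.diag_mul_le_mulVec hx i
  rw [← h, mul_zero] at this
  linarith

theorem diag_neg_of_mulVec_neg (hM : Metzler M) {x : m → ℝ} (hx : ∀ j, 0 < x j) {i : m}
    (hi : (M *ᵥ x) i < 0) : M i i < 0 :=
  neg_of_mul_neg_left ((hM.diag_mul_le_mulVec (fun j => (hx j).le) i).trans_lt hi) (hx i).le

theorem sum_sum_mul_le_sum_sq_mul (hM : Metzler M) {a b : m → ℝ} (ha : ∀ i, 0 ≤ a i)
    (hb : ∀ i, 0 ≤ b i) (u : m → ℝ) :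
    ∑ i, ∑ j, a i * M i j * b j * (u i * u j) ≤
      ∑ i, u i ^ 2 * (a i * (M *ᵥ b) i + b i * (Mᵀ *ᵥ a) i) / 2 := by
  calc ∑ i, ∑ j, a i * M i j * b j * (u i * u j)
      ≤ ∑ i, ∑ j, a i * M i j * b j * ((u i ^ 2 + u j ^ 2) / 2) := by
        refine Finset.sum_le_sum fun i _ => Finset.sum_le_sum fun j _ => ?_
        rcases eq_or_ne i j with rfl | hij
        · exact le_of_eq (by ring)
        · have hc : 0 ≤ a i * M i j * b j := mul_nonneg (mul_nonneg (ha i) (hM i j hij)) (hb j)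
          exact mul_le_mul_of_nonneg_left (by nlinarith [sq_nonneg (u i - u j)]) hc
    _ = ∑ i, ∑ j, a i * M i j * b j * u i ^ 2 / 2 + ∑ j, ∑ i, a i * M i j * b j * u j ^ 2 / 2 := by
        rw [Finset.sum_comm (γ := m) (f := fun j i => a i * M i j * b j * u j ^ 2 / 2),
          ← Finset.sum_add_distrib]
        refine Finset.sum_congr rfl fun i _ => ?_
        rw [← Finset.sum_add_distrib]
        exact Finset.sum_congr rfl fun j _ => by ring
    _ = _ := by
        simp only [mulVec, dotProduct, transpose_apply, Finset.mul_sum, Finset.sum_div,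
          mul_add, add_div, Finset.sum_add_distrib]
        congr 1 <;> exact Finset.sum_congr rfl fun i _ => Finset.sum_congr rfl fun j _ => by ring

end Metzler

namespace HurwitzStable

variable [DecidableEq m] {M : Matrix m m ℝ}

theorem isUnit_smul_one_sub (hM : HurwitzStable M) {z : ℂ} (hz : 0 ≤ z.re) :
    IsUnit (z • 1 - M.map Complex.ofReal) := by
  rw [← Algebra.algebraMap_eq_smul_one, ← spectrum.notMem_iff]
  exact fun hmem => (hM z hmem).not_ge hz

theorem det_sub_smul_one_ne_zero (hM : HurwitzStable M) {c : ℝ} (hc : 0 ≤ c) :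
    (M - c • 1).det ≠ 0 := by
  have hC : ((M - c • 1).det : ℂ) = (-1) ^ Fintype.card m *
      ((c : ℂ) • 1 - M.map Complex.ofReal).det := by
    rw [← det_neg, neg_sub, ← Complex.ofRealHom_eq_coe, RingHom.map_det]
    congr 1
    ext i j
    by_cases h : i = j <;> simp [h]
  have := (isUnit_iff_isUnit_det _).mp (hM.isUnit_smul_one_sub (z := c) (by simpa using hc))
  exact_mod_cast (hC ▸ mul_ne_zero (pow_ne_zero _ (by norm_num)) this.ne_zero :
    ((M - c • 1).det : ℂ) ≠ 0)

theorem det_smul_sub_smul_one_ne_zero (hM : HurwitzStable M) {t : ℝ} (ht0 : 0 ≤ t)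
    (ht1 : t ≤ 1) : (t • M - (1 - t) • 1).det ≠ 0 := by
  rcases ht0.eq_or_lt with rfl | ht0
  · simp [det_neg]
  · rw [show t • M - (1 - t) • 1 = t • (M - ((1 - t) / t) • 1) by
      rw [smul_sub, smul_smul, mul_div_cancel₀ _ ht0.ne'], det_smul]
    exact mul_ne_zero (pow_ne_zero _ ht0.ne')
      (hM.det_sub_smul_one_ne_zero (div_nonneg (by linarith) ht0.le))

theorem transpose (hM : HurwitzStable M) : HurwitzStable Mᵀ := by
  refine fun z hz => hM z (spectrum.mem_iff.2 fun hunit => spectrum.mem_iff.1 hz ?_)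
  rw [Algebra.algebraMap_eq_smul_one] at hunit ⊢
  rw [← isUnit_transpose, transpose_sub, transpose_smul, transpose_one, transpose_map,
    transpose_transpose]
  exact hunit

end HurwitzStable

theorem Metzler.exists_pos_mulVec_neg [DecidableEq m] {M : Matrix m m ℝ} (hM : Metzler M)
    (hH : HurwitzStable M) : ∃ ξ : m → ℝ, (∀ i, 0 < ξ i) ∧ ∀ i, (M *ᵥ ξ) i < 0 := by
  set B : ℝ → Matrix m m ℝ := fun t => t • M - (1 - t) • 1 with hB
  set ξ : ℝ → m → ℝ := fun t => (B t)⁻¹ *ᵥ (-1) with hξ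
  have hdet : ∀ t ∈ Set.Icc (0 : ℝ) 1, (B t).det ≠ 0 := fun t ht =>
    hH.det_smul_sub_smul_one_ne_zero ht.1 ht.2
  have hBξ : ∀ t ∈ Set.Icc (0 : ℝ) 1, B t *ᵥ ξ t = -1 := fun t ht => by
    rw [hξ, mulVec_mulVec, mul_nonsing_inv _ (isUnit_iff_ne_zero.2 (hdet t ht)), one_mulVec]
  have hcont : ContinuousOn ξ (Set.Icc 0 1) := fun t ht =>
    ((continuous_id.matrix_mulVec continuous_const).continuousAt.comp
      ((continuousAt_matrix_inv_of_det_ne_zero _ (hdet t ht)).comp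
        (by fun_prop : Continuous B).continuousAt)).continuousWithinAt
  set U : Set (m → ℝ) := Set.univ.pi fun _ => Set.Ioi 0
  set V : Set (m → ℝ) := ⋃ i, (fun v => v i) ⁻¹' Set.Iio 0
  have hU : IsOpen U := isOpen_set_pi Set.finite_univ fun _ _ => isOpen_Ioi
  have hV : IsOpen V := isOpen_iUnion fun i => isOpen_Iio.preimage (continuous_apply i)
  have hUV : Disjoint U V := by
    refine Set.disjoint_left.2 fun v hvU hvV => ?_
    obtain ⟨i, hi⟩ := Set.mem_iUnion.1 hvV
    exact (hvU i (Set.mem_univ i)).not_gt (show v i < 0 from hi)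
  have hcover : ξ '' Set.Icc 0 1 ⊆ U ∪ V := by
    rintro _ ⟨t, ht, rfl⟩
    by_cases hneg : ∃ i, ξ t i < 0
    · exact Or.inr (Set.mem_iUnion.2 hneg)
    · simp only [not_exists, not_lt] at hneg
      refine Or.inl fun i _ => (hM.smul_sub_smul_one ht.1 (1 - t)).pos_of_mulVec_neg hneg ?_
      exact (congrFun (hBξ t ht) i).trans_lt (by simp)
  have h0 : ξ 0 ∈ U := fun i _ => by
    have := congrFun (hBξ 0 ⟨le_rfl, zero_le_one⟩) i
    simp [hB, neg_mulVec] at this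
    simp [this]
  have hsub := (isPreconnected_Icc.image ξ hcont).subset_left_of_subset_union hU hV hUV hcover
    ⟨ξ 0, ⟨0, ⟨le_rfl, zero_le_one⟩, rfl⟩, h0⟩
  have h1 : (1 : ℝ) ∈ Set.Icc (0 : ℝ) 1 := ⟨zero_le_one, le_rfl⟩
  refine ⟨ξ 1, fun i => hsub ⟨1, h1, rfl⟩ i (Set.mem_univ i), fun i => ?_⟩
  have := congrFun (hBξ 1 h1) i
  simp only [hB, one_smul, sub_self, zero_smul, sub_zero] at this
  simp [this]

theorem Metzler.exists_diagonal_lyapunov [DecidableEq m] {M : Matrix m m ℝ} (hM : Metzler M)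
    (hH : HurwitzStable M) :
    ∃ w : m → ℝ, (∀ i, 0 < w i) ∧ ∀ x : m → ℝ, x ≠ 0 → x ⬝ᵥ (diagonal w * M) *ᵥ x < 0 := by
  obtain ⟨ξ, hξ, hMξ⟩ := hM.exists_pos_mulVec_neg hH
  obtain ⟨ζ, hζ, hMζ⟩ := hM.transpose.exists_pos_mulVec_neg hH.transpose
  refine ⟨fun i => ζ i / ξ i, fun i => div_pos (hζ i) (hξ i), fun x hx => ?_⟩
  -- In the coordinates `u = x / ξ` the form becomes `∑ ζ_i M_ij ξ_j u_i u_j`.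
  set u : m → ℝ := fun i => x i / ξ i
  have hxu : x ⬝ᵥ (diagonal (fun i => ζ i / ξ i) * M) *ᵥ x =
      ∑ i, ∑ j, ζ i * M i j * ξ j * (u i * u j) := by
    simp only [dotProduct, mulVec, diagonal_mul, Finset.mul_sum]
    refine Finset.sum_congr rfl fun i _ => Finset.sum_congr rfl fun j _ => ?_
    have hξi := (hξ i).ne'
    have hξj := (hξ j).ne'
    simp only [u]
    field_simp
  have hd : ∀ i, ζ i * (M *ᵥ ξ) i + ξ i * (Mᵀ *ᵥ ζ) i < 0 := fun i => by
    nlinarith [mul_neg_of_pos_of_neg (hζ i) (hMξ i), mul_neg_of_pos_of_neg (hξ i) (hMζ i)]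
  obtain ⟨k, hk⟩ := Function.ne_iff.1 hx
  have huk : u k ≠ 0 := div_ne_zero hk (hξ k).ne'
  rw [hxu]
  refine (hM.sum_sum_mul_le_sum_sq_mul (fun i => (hζ i).le) (fun i => (hξ i).le) u).trans_lt
    ?_
  refine Finset.sum_neg' (fun i _ => ?_) ⟨k, Finset.mem_univ k, ?_⟩
  · exact div_nonpos_of_nonpos_of_nonneg (mul_nonpos_of_nonneg_of_nonpos (sq_nonneg _) (hd i).le)
      zero_le_two
  · exact div_neg_of_neg_of_pos (mul_neg_of_pos_of_neg (pow_two_pos_of_ne_zero huk) (hd k)) two_pos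

theorem re_star_dotProduct_map_ofReal_mulVec (A : Matrix m m ℝ) (y : m → ℂ) :
    (star y ⬝ᵥ A.map Complex.ofReal *ᵥ y).re =
      (fun i => (y i).re) ⬝ᵥ A *ᵥ (fun i => (y i).re) +
        (fun i => (y i).im) ⬝ᵥ A *ᵥ fun i => (y i).im := by
  simp only [dotProduct, mulVec, Complex.re_sum, Pi.star_apply, map_apply, Finset.mul_sum,
    ← Finset.sum_add_distrib]
  refine Finset.sum_congr rfl fun i _ => Finset.sum_congr rfl fun j _ => ?_
  simp only [Complex.mul_re, Complex.mul_im, Complex.star_def, Complex.conj_re, Complex.conj_im,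
    Complex.ofReal_re, Complex.ofReal_im]
  ring

theorem re_star_dotProduct_map_ofReal_mulVec_neg {A : Matrix m m ℝ}
    (hA : ∀ x : m → ℝ, x ≠ 0 → x ⬝ᵥ A *ᵥ x < 0) {y : m → ℂ} (hy : y ≠ 0) :
    (star y ⬝ᵥ A.map Complex.ofReal *ᵥ y).re < 0 := by
  have hA' : ∀ x : m → ℝ, x ⬝ᵥ A *ᵥ x ≤ 0 := fun x => by
    rcases eq_or_ne x 0 with rfl | hx
    · simp
    · exact (hA x hx).le
  rw [re_star_dotProduct_map_ofReal_mulVec]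
  by_cases hre : (fun i => (y i).re) = 0
  · have him : (fun i => (y i).im) ≠ 0 := fun him =>
      hy (funext fun i => Complex.ext (congrFun hre i) (congrFun him i))
    exact add_neg_of_nonpos_of_neg (hA' _) (hA _ him)
  · exact add_neg_of_neg_of_nonpos (hA _ hre) (hA' _)

theorem mul_re_eq_neg_re_star_dotProduct [DecidableEq m] (M : Matrix m m ℝ) (p : m → ℝ) (ω : ℝ)
    (k : m) {y : m → ℂ}
    (hy : ((Complex.I * ω) • 1 - M.map Complex.ofReal) *ᵥ y = Pi.single k 1) :
    p k * (y k).re = -(star y ⬝ᵥ (diagonal p * M).map Complex.ofReal *ᵥ y).re := by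
  have hMy : ∀ i, ((diagonal p * M).map Complex.ofReal *ᵥ y) i =
      p i * (Complex.I * ω * y i - (Pi.single k 1 : m → ℂ) i) := fun i => by
    rw [← hy, sub_mulVec, smul_mulVec, one_mulVec]
    simp [mulVec, dotProduct, diagonal_mul, Finset.mul_sum, mul_assoc]
  simp only [dotProduct, Complex.re_sum, hMy, Pi.star_apply]
  simp [Pi.single_apply, Complex.mul_re, Complex.mul_im, mul_sub, apply_ite Complex.re]
  rw [Finset.sum_eq_zero fun i _ => by ring]
  ring

theorem mulVec_nonsing_inv_mulVec {R : Type*} [CommRing R] [DecidableEq m] {A : Matrix m m R}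
    (h : IsUnit A.det) (v : m → R) : A *ᵥ (A⁻¹ *ᵥ v) = v := by
  rw [mulVec_mulVec, mul_nonsing_inv _ h, one_mulVec]

theorem Metzler.re_resolvent_pos [DecidableEq m] {M : Matrix m m ℝ} (hM : Metzler M)
    (hH : HurwitzStable M) (ω : ℝ) (k : m) :
    0 < ((((Complex.I * ω) • 1 - M.map Complex.ofReal)⁻¹ *ᵥ Pi.single k 1) k).re := by
  obtain ⟨w, hw, hneg⟩ := hM.exists_diagonal_lyapunov hH
  have hX := (isUnit_iff_isUnit_det _).1 (hH.isUnit_smul_one_sub (z := Complex.I * ω) (by simp))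
  have hy := mulVec_nonsing_inv_mulVec hX (Pi.single k 1)
  have hy0 : ((Complex.I * ω) • 1 - M.map Complex.ofReal)⁻¹ *ᵥ Pi.single k 1 ≠ 0 := fun h => by
    simpa [h] using congrFun hy k
  refine pos_of_mul_pos_right ?_ (hw k).le
  rw [mul_re_eq_neg_re_star_dotProduct M w ω k hy, neg_pos]
  exact re_star_dotProduct_map_ofReal_mulVec_neg hneg hy0

theorem star_smul_dotProduct_mulVec_smul (B : Matrix m m ℂ) (c : ℂ) (v : m → ℂ) :
    star (c • v) ⬝ᵥ B *ᵥ (c • v) = Complex.normSq c * (star v ⬝ᵥ B *ᵥ v) := by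
  rw [star_smul, mulVec_smul, smul_dotProduct, dotProduct_smul, smul_smul, smul_eq_mul,
    Complex.normSq_eq_conj_mul_self]
  rfl

theorem sq_mul_re_resolvent_eq [DecidableEq m] (M : Matrix m m ℝ) (k : m) {ω : ℝ} (hω : ω ≠ 0)
    (hdet : (Complex.I • 1 - ((ω⁻¹ : ℝ) : ℂ) • M.map Complex.ofReal).det ≠ 0) :
    ω ^ 2 * ((((Complex.I * ω) • 1 - M.map Complex.ofReal)⁻¹ *ᵥ Pi.single k 1) k).re =
      -(star ((Complex.I • 1 - ((ω⁻¹ : ℝ) : ℂ) • M.map Complex.ofReal)⁻¹ *ᵥ Pi.single k 1) ⬝ᵥ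
        M.map Complex.ofReal *ᵥ
          ((Complex.I • 1 - ((ω⁻¹ : ℝ) : ℂ) • M.map Complex.ofReal)⁻¹ *ᵥ Pi.single k 1)).re := by
  set A := M.map Complex.ofReal
  set G := Complex.I • 1 - ((ω⁻¹ : ℝ) : ℂ) • A
  set v := G⁻¹ *ᵥ Pi.single k 1
  have hω' : (ω : ℂ) ≠ 0 := by exact_mod_cast hω
  have hX : (Complex.I * ω) • 1 - A = (ω : ℂ) • G := by
    simp only [G, smul_sub, smul_smul]
    push_cast
    rw [mul_inv_cancel₀ hω', one_smul, mul_comm]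
  have hXinv : ((Complex.I * ω) • 1 - A)⁻¹ = (ω : ℂ)⁻¹ • G⁻¹ := by
    rw [hX]
    refine inv_eq_right_inv ?_
    rw [smul_mul_smul_comm, mul_inv_cancel₀ hω', mul_nonsing_inv _ (isUnit_iff_ne_zero.2 hdet),
      one_smul]
  have hy : ((Complex.I * ω) • 1 - A) *ᵥ ((ω : ℂ)⁻¹ • v) = Pi.single k 1 := by
    rw [hX, smul_mulVec, mulVec_smul, smul_smul, mul_inv_cancel₀ hω', one_smul,
      mulVec_nonsing_inv_mulVec (isUnit_iff_ne_zero.2 hdet)]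
  have hre := mul_re_eq_neg_re_star_dotProduct M (fun _ => 1) ω k hy
  simp only [diagonal_one, one_mul] at hre
  rw [hXinv, smul_mulVec, hre, star_smul_dotProduct_mulVec_smul, ← Complex.ofReal_inv,
    Complex.normSq_ofReal, Complex.re_ofReal_mul]
  field_simp
  rfl

theorem tendsto_sq_mul_re_resolvent [DecidableEq m] (M : Matrix m m ℝ) (k : m) :
    Tendsto (fun ω : ℝ => ω ^ 2 *
      ((((Complex.I * ω) • 1 - M.map Complex.ofReal)⁻¹ *ᵥ Pi.single k 1) k).re)
      atTop (𝓝 (-M k k)) := by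
  set A := M.map Complex.ofReal
  set e : m → ℂ := Pi.single k 1
  set q : (m → ℂ) → ℝ := fun v => -(star v ⬝ᵥ A *ᵥ v).re
  set G : ℝ → Matrix m m ℂ := fun s => Complex.I • 1 - (s : ℂ) • A
  have hGcont : Continuous G := by fun_prop
  have hdet0 : (G 0).det ≠ 0 := by simp [G]
  have hq : Continuous q := by fun_prop
  have hlim : q ((G 0)⁻¹ *ᵥ e) = -M k k := by
    have hG0 : (G 0)⁻¹ = (-Complex.I) • 1 :=
      inv_eq_right_inv (by simp [G, smul_smul])
    rw [hG0, smul_mulVec, one_mulVec]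
    change -(star ((-Complex.I) • e) ⬝ᵥ A *ᵥ ((-Complex.I) • e)).re = -M k k
    rw [star_smul_dotProduct_mulVec_smul]
    simp [e, A, Pi.star_single]
  have hqG : ContinuousAt (fun s => q ((G s)⁻¹ *ᵥ e)) 0 :=
    hq.continuousAt.comp ((continuous_id.matrix_mulVec continuous_const).continuousAt.comp
      ((continuousAt_matrix_inv_of_det_ne_zero _ hdet0).comp hGcont.continuousAt))
  have hev : ∀ᶠ ω : ℝ in atTop, ω ≠ 0 ∧ (G ω⁻¹).det ≠ 0 :=
    (eventually_ne_atTop 0).and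
      (tendsto_inv_atTop_zero.eventually (hGcont.matrix_det.continuousAt.eventually_ne hdet0))
  refine (hlim ▸ hqG.tendsto.comp tendsto_inv_atTop_zero).congr' ?_
  filter_upwards [hev] with ω ⟨hω, hdet⟩
  exact (sq_mul_re_resolvent_eq M k hω hdet).symm

/-- Theorem 2 of the paper: for a Metzler Hurwitz stable matrix M, the transfer function
H(s) = eₙᵀ(sI − M)⁻¹eₙ is strictly positive real. -/
theorem stmt11 (n : ℕ) (M : Matrix (Fin (n+1)) (Fin (n+1)) ℝ)
    (hMetz : Metzler M) (hHur : HurwitzStable M) :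
    (∀ ω : ℝ,
      IsUnit ((Complex.I * ω) • (1 : Matrix (Fin (n+1)) (Fin (n+1)) ℂ) - M.map Complex.ofReal) ∧
      0 < ((Pi.single (Fin.last n) 1 : Fin (n+1) → ℂ) ⬝ᵥ
        (((Complex.I * ω) • (1 : Matrix (Fin (n+1)) (Fin (n+1)) ℂ) - M.map Complex.ofReal)⁻¹
          *ᵥ (Pi.single (Fin.last n) 1 : Fin (n+1) → ℂ))).re) ∧
    Tendsto (fun ω : ℝ => ω ^ 2 *
        ((Pi.single (Fin.last n) 1 : Fin (n+1) → ℂ) ⬝ᵥ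
          (((Complex.I * ω) • (1 : Matrix (Fin (n+1)) (Fin (n+1)) ℂ) - M.map Complex.ofReal)⁻¹
            *ᵥ (Pi.single (Fin.last n) 1 : Fin (n+1) → ℂ))).re)
      atTop (𝓝 (-(M (Fin.last n) (Fin.last n)))) ∧
    0 < -(M (Fin.last n) (Fin.last n)) := by
  obtain ⟨ξ, hξ, hMξ⟩ := hMetz.exists_pos_mulVec_neg hHur
  simp only [single_dotProduct, one_mul]
  exact ⟨fun ω => ⟨hHur.isUnit_smul_one_sub (by simp), hMetz.re_resolvent_pos hHur ω _⟩,
    tendsto_sq_mul_re_resolvent M _, neg_pos.2 (hMetz.diag_neg_of_mulVec_neg hξ (hMξ _))⟩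
end

section
/- Let n ≥ 2 and let A ∈ ℝ^{n×n} be Metzler, invertible, and output unstable (its leading principal (n−1)×(n−1) submatrix A₁₁ is Hurwitz stable and A_{nn} > 0). Let b₀ ∈ ℝⁿ with b₀ ≥ 0 entrywise, let r > 0, and define g₀ := −eₙᵀA⁻¹b₀, g_n := −eₙᵀA⁻¹eₙ, and u* := (g₀ − r)/(g_n r). Then the matrix A − u* eₙeₙᵀ is Hurwitz stable if and only if g₀ < 0. -/
open Matrix

/-!
Write `A = [[A₁₁, b], [c, d]]`. Since `A₁₁` is Metzler and Hurwitz, `-A₁₁⁻¹ ≥ 0` entrywise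
(a Neumann series: for small `t > 0`, `1 + t A₁₁` is nonnegative with spectrum in the unit disc).
Hence the Schur complement `s = d - c A₁₁⁻¹ b` is at least `d > 0`, `(A⁻¹)ₙₙ = 1 / s` and
`g₀ = -K / s` with `K = b₀ₙ - c A₁₁⁻¹ b₀' ≥ 0`. So `u* = s + K / r`, and the Schur complement of
`A - u* eₙeₙᵀ` is `-K / r`. If `K = 0` that matrix is singular. If `K > 0` it maps the positive
vector `(-A₁₁⁻¹ (b + ε 1), 1)` to a negative one for small `ε`, and a Metzler matrix with such a
vector is Hurwitz by Gershgorin's theorem after a diagonal rescaling.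
-/

open Filter Topology Pointwise

theorem spectrum.summable_pow_of_forall_norm_lt_one {A : Type*} [NormedRing A]
    [NormedAlgebra ℂ A] [CompleteSpace A] {a : A} (h : ∀ z ∈ spectrum ℂ a, ‖z‖ < 1) :
    Summable (a ^ ·) := by
  have hρ : spectralRadius ℂ a < 1 := by
    rcases (spectrum ℂ a).eq_empty_or_nonempty with hempty | hne
    · simp [spectralRadius, hempty]
    · exact_mod_cast spectrum.spectralRadius_lt_of_forall_lt_of_nonempty hne
        (r := 1) fun z hz => mod_cast h z hz
  obtain ⟨γ, hγ0, hργ, hγ1⟩ := ENNReal.lt_iff_exists_real_btwn.1 hρ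
  rw [ENNReal.ofReal_lt_one] at hγ1
  refine .of_norm_bounded_eventually_nat (summable_geometric_of_lt_one hγ0 hγ1) ?_
  filter_upwards [(spectrum.pow_norm_pow_one_div_tendsto_nhds_spectralRadius a).eventually_lt_const
    hργ, eventually_ge_atTop 1] with k hk hk1
  rw [ENNReal.ofReal_lt_ofReal_iff_of_nonneg (by positivity)] at hk
  calc ‖a ^ k‖ = (‖a ^ k‖ ^ (1 / k : ℝ)) ^ k := by
        rw [← Real.rpow_natCast, ← Real.rpow_mul (norm_nonneg _), one_div,
          inv_mul_cancel₀ (by positivity), Real.rpow_one]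
    _ ≤ γ ^ k := pow_le_pow_left₀ (by positivity) hk.le k

theorem Complex.norm_one_add_mul_lt_one {z : ℂ} {t : ℝ} (ht : 0 < t)
    (h : t * ‖z‖ ^ 2 < 2 * -z.re) : ‖1 + t * z‖ < 1 := by
  have hsq : ‖1 + t * z‖ ^ 2 = 1 + t * (2 * z.re + t * ‖z‖ ^ 2) := by
    rw [Complex.sq_norm, Complex.sq_norm, Complex.normSq_apply, Complex.normSq_apply]
    simp only [add_re, one_re, mul_re, ofReal_re, ofReal_im, zero_mul, sub_zero, add_im, one_im,
      mul_im, add_zero, zero_add]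
    ring
  have : ‖1 + t * z‖ ^ 2 < 1 := by rw [hsq]; nlinarith
  nlinarith [norm_nonneg (1 + t * z)]

theorem Matrix.dotProduct_mulVec_nonpos {m : Type*} [Fintype m] {c b : m → ℝ} {N : Matrix m m ℝ}
    (hc : ∀ i, 0 ≤ c i) (hN : ∀ i j, N i j ≤ 0) (hb : ∀ j, 0 ≤ b j) : c ⬝ᵥ (N *ᵥ b) ≤ 0 :=
  Finset.sum_nonpos fun i _ => mul_nonpos_of_nonneg_of_nonpos (hc i) <|
    Finset.sum_nonpos fun j _ => mul_nonpos_of_nonpos_of_nonneg (hN i j) (hb j)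

theorem Metzler.submatrix {m n : Type*} [Fintype m] [Fintype n] {M : Matrix m m ℝ}
    (hM : Metzler M) {f : n → m} (hf : Function.Injective f) : Metzler (M.submatrix f f) :=
  fun i j hij => hM (f i) (f j) (hf.ne hij)

section Square

variable {m : Type*} [Fintype m] [DecidableEq m]

theorem Matrix.mulVec_apply_pos {N : Matrix m m ℝ} (hN : ∀ i j, 0 ≤ N i j) (hunit : IsUnit N)
    {u : m → ℝ} (hu : ∀ j, 0 < u j) (i : m) : 0 < (N *ᵥ u) i := by
  obtain ⟨j, hj⟩ : ∃ j, N i j ≠ 0 := by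
    by_contra! hrow
    exact ((isUnit_iff_isUnit_det N).1 hunit).ne_zero (det_eq_zero_of_row_eq_zero i hrow)
  exact Finset.sum_pos' (fun j _ => mul_nonneg (hN i j) (hu j).le)
    ⟨j, Finset.mem_univ j, mul_pos ((hN i j).lt_of_ne' hj) (hu j)⟩

theorem Matrix.spectrum_map_ofReal_one_add_smul (M : Matrix m m ℝ) {t : ℝ} (ht : t ≠ 0) :
    spectrum ℂ ((1 + t • M).map Complex.ofReal) =
      {1} + (t : ℂ) • spectrum ℂ (M.map Complex.ofReal) := by
  have ht' : (t : ℂ) ≠ 0 := Complex.ofReal_ne_zero.2 ht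
  have hmap : (1 + t • M).map Complex.ofReal =
      algebraMap ℂ _ 1 + Units.mk0 (t : ℂ) ht' • M.map Complex.ofReal := by
    ext i j
    by_cases hij : i = j <;> simp [hij]
  rw [hmap, ← spectrum.singleton_add_eq, spectrum.unit_smul_eq_smul]
  rfl

section LinftyNorm

attribute [local instance] Matrix.linftyOpNormedRing Matrix.linftyOpNormedAlgebra

theorem Matrix.inv_one_sub_apply_nonneg {x : Matrix m m ℝ} (hx : ∀ i j, 0 ≤ x i j)
    (hσ : ∀ z ∈ spectrum ℂ (x.map Complex.ofReal), ‖z‖ < 1) :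
    IsUnit (1 - x).det ∧ ∀ i j, 0 ≤ (1 - x)⁻¹ i j := by
  have hsum : Summable (x ^ ·) := by
    have hC := spectrum.summable_pow_of_forall_norm_lt_one hσ
    refine Pi.summable.2 fun i => Pi.summable.2 fun j => Complex.summable_ofReal.1 ?_
    exact (Pi.summable.1 (Pi.summable.1 hC i) j).congr fun k =>
      congrFun (congrFun (Matrix.map_pow x Complex.ofRealHom k).symm i) j
  have hinv := hsum.one_sub_mul_tsum_pow
  refine ⟨isUnit_det_of_right_inverse hinv, fun i j => ?_⟩
  have hentry : (∑' k, x ^ k) i j = ∑' k, (x ^ k) i j := by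
    have := congrFun (tsum_apply hsum (x := i)) j
    rwa [tsum_apply (Pi.summable.1 hsum i)] at this
  rw [inv_eq_right_inv hinv, hentry]
  exact tsum_nonneg fun k => pow_apply_nonneg hx k i j

end LinftyNorm

theorem Metzler.sub_smul_vecMulVec_single {M : Matrix m m ℝ} (hM : Metzler M) (u : ℝ) (l : m) :
    Metzler (M - u • vecMulVec (Pi.single l 1) (Pi.single l 1)) := by
  intro i j hij
  have hE : vecMulVec (Pi.single l (1 : ℝ)) (Pi.single l 1) i j = 0 := by
    by_cases hi : i = l
    · simp [vecMulVec_apply, Pi.single_apply, hi ▸ hij.symm]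
    · simp [vecMulVec_apply, Pi.single_apply, hi]
  simpa [hE] using hM i j hij

theorem HurwitzStable.det_ne_zero {M : Matrix m m ℝ} (h : HurwitzStable M) : M.det ≠ 0 := by
  intro hdet
  have h0 : (0 : ℂ) ∈ spectrum ℂ (M.map Complex.ofReal) := by
    rw [spectrum.zero_mem_iff, isUnit_iff_isUnit_det, isUnit_iff_ne_zero, not_not]
    exact (Complex.ofRealHom.map_det M).symm.trans (by simp [hdet])
  simpa using h 0 h0

theorem HurwitzStable.eq_zero_of_mulVec_eq_zero {M : Matrix m m ℝ} (h : HurwitzStable M)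
    {v : m → ℝ} (hv : M *ᵥ v = 0) : v = 0 := by
  by_contra hne
  exact h.det_ne_zero (exists_mulVec_eq_zero_iff.1 ⟨v, hne, hv⟩)

theorem Metzler.hurwitzStable_of_mulVec_neg {M : Matrix m m ℝ} (hM : Metzler M) {v : m → ℝ}
    (hv : ∀ i, 0 < v i) (hMv : ∀ i, (M *ᵥ v) i < 0) : HurwitzStable M := by
  intro z hz
  have hv' : ∀ i, (v i : ℂ) ≠ 0 := fun i => Complex.ofReal_ne_zero.2 (hv i).ne'
  let D : (Matrix m m ℂ)ˣ :=
    ⟨diagonal fun i => (v i : ℂ)⁻¹, diagonal fun i => (v i : ℂ),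
      by simp [diagonal_mul_diagonal, inv_mul_cancel₀ (hv' _)],
      by simp [diagonal_mul_diagonal, mul_inv_cancel₀ (hv' _)]⟩
  set N := (D : Matrix m m ℂ) * M.map Complex.ofReal * ((D⁻¹ : (Matrix m m ℂ)ˣ) : Matrix m m ℂ)
  have hN : ∀ i j, N i j = (M i j * v j / v i : ℝ) := by
    intro i j
    simp only [N, D, Units.inv_mk, mul_diagonal, diagonal_mul, map_apply, Complex.ofReal_div,
      Complex.ofReal_mul]
    ring
  have hzN : Module.End.HasEigenvalue (toLin' N) z := by
    rwa [Module.End.hasEigenvalue_iff_mem_spectrum, spectrum_toLin', spectrum.units_conjugate]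
  obtain ⟨i, hi⟩ := eigenvalue_mem_ball hzN
  have hdiag : N i i = M i i := by rw [hN, mul_div_cancel_right₀ _ (hv i).ne']
  rw [Metric.mem_closedBall, hdiag, dist_eq_norm] at hi
  have hrad : ∑ j ∈ Finset.univ.erase i, ‖N i j‖ < -M i i := by
    have hnorm : ∀ j ∈ Finset.univ.erase i, ‖N i j‖ = M i j * v j / v i := fun j hj => by
      rw [hN, Complex.norm_real, Real.norm_of_nonneg]
      exact div_nonneg (mul_nonneg (hM i j (Finset.ne_of_mem_erase hj).symm) (hv j).le) (hv i).le
    rw [Finset.sum_congr rfl hnorm, ← Finset.sum_div, div_lt_iff₀ (hv i)]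
    have hrow := hMv i
    rw [mulVec, dotProduct, ← Finset.add_sum_erase _ _ (Finset.mem_univ i)] at hrow
    linarith
  calc z.re = M i i + (z - M i i).re := by simp
    _ ≤ M i i + ‖z - M i i‖ := by grw [Complex.re_le_norm]
    _ < 0 := by linarith

theorem Metzler.inv_apply_nonpos_of_hurwitzStable {M : Matrix m m ℝ} (hM : Metzler M)
    (h : HurwitzStable M) (i j : m) : M⁻¹ i j ≤ 0 := by
  obtain ⟨t, ht, hdiag, hσ⟩ : ∃ t : ℝ, 0 < t ∧ (∀ i, 0 ≤ 1 + t * M i i) ∧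
      ∀ z ∈ spectrum ℂ (M.map Complex.ofReal), t * ‖z‖ ^ 2 < 2 * -z.re := by
    have hsmall (c : ℝ) {d : ℝ} (hd : 0 < d) : ∀ᶠ t in 𝓝 (0 : ℝ), t * c < d :=
      ((continuous_id.mul continuous_const).tendsto' 0 0 (zero_mul c)).eventually_lt_const hd
    refine (eventually_mem_nhdsWithin.and (nhdsWithin_le_nhds ((eventually_all.2 fun i => ?_).and
      ((finite_spectrum _).eventually_all.2 fun z hz => ?_)))).exists (f := 𝓝[>] 0)
    · filter_upwards [hsmall (-M i i) one_pos] with t ht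
      linarith
    · exact hsmall _ (by linarith [h z hz])
  set x := 1 + t • M
  have hx0 : ∀ i j, 0 ≤ x i j := by
    intro i j
    by_cases hij : i = j
    · subst hij; simpa [x] using hdiag i
    · simpa [x, one_apply, hij] using mul_nonneg ht.le (hM i j hij)
  have hxσ : ∀ ζ ∈ spectrum ℂ (x.map Complex.ofReal), ‖ζ‖ < 1 := by
    rw [Matrix.spectrum_map_ofReal_one_add_smul M ht.ne']
    rintro _ ⟨_, rfl, _, ⟨z, hz, rfl⟩, rfl⟩
    exact Complex.norm_one_add_mul_lt_one ht (hσ z hz)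
  obtain ⟨hdet, hnonneg⟩ := inv_one_sub_apply_nonneg hx0 hxσ
  have hM' : M = Units.mk0 (-t⁻¹) (by simp [ht.ne']) • (1 - x) := by
    simp [x, smul_smul, ht.ne']
  rw [hM', inv_smul' _ _ hdet, Matrix.smul_apply, Units.smul_def, Units.val_inv_eq_inv_val,
    Units.val_mk0, inv_neg, inv_inv, smul_eq_mul, neg_mul, neg_nonpos]
  exact mul_nonneg ht.le (hnonneg i j)

end Square

namespace Matrix

section LastBlock

variable {R : Type*} [CommRing R] {k : ℕ} (M : Matrix (Fin (k + 1)) (Fin (k + 1)) R)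

abbrev leadingBlock : Matrix (Fin k) (Fin k) R := M.submatrix Fin.castSucc Fin.castSucc

def lastColumnInit : Fin k → R := fun i => M i.castSucc (Fin.last k)

def lastRowInit : Fin k → R := fun j => M (Fin.last k) j.castSucc

/-- The Schur complement `d - c A₁₁⁻¹ b`; a junk value when `A₁₁` is singular. -/
noncomputable def schurLast : R :=
  M (Fin.last k) (Fin.last k) - lastRowInit M ⬝ᵥ (M.leadingBlock⁻¹ *ᵥ lastColumnInit M)

theorem mulVec_snoc_castSucc (z : Fin k → R) (t : R) (i : Fin k) :
    (M *ᵥ Fin.snoc z t) i.castSucc = (M.leadingBlock *ᵥ z) i + lastColumnInit M i * t := by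
  simp [mulVec, dotProduct, Fin.sum_univ_castSucc, lastColumnInit]

theorem mulVec_snoc_last (z : Fin k → R) (t : R) :
    (M *ᵥ Fin.snoc z t) (Fin.last k) = lastRowInit M ⬝ᵥ z + M (Fin.last k) (Fin.last k) * t := by
  simp [mulVec, dotProduct, Fin.sum_univ_castSucc, lastRowInit]

variable {M}

theorem mulVec_snoc_eq_snoc (hM : IsUnit M.leadingBlock.det) (y : Fin k → R) (t : R) :
    M *ᵥ Fin.snoc (M.leadingBlock⁻¹ *ᵥ (y - t • lastColumnInit M)) t =
      Fin.snoc y (t * schurLast M + lastRowInit M ⬝ᵥ (M.leadingBlock⁻¹ *ᵥ y)) := by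
  ext i
  refine Fin.lastCases ?_ (fun i => ?_) i
  · rw [mulVec_snoc_last, Fin.snoc_last, schurLast, mulVec_sub, mulVec_smul, dotProduct_sub,
      dotProduct_smul, smul_eq_mul]
    ring
  · rw [mulVec_snoc_castSucc, mulVec_mulVec, mul_nonsing_inv _ hM, one_mulVec, Fin.snoc_castSucc,
      Pi.sub_apply, Pi.smul_apply, smul_eq_mul]
    ring

theorem leadingBlock_sub_smul_vecMulVec_single_last (u : R) :
    (M - u • vecMulVec (Pi.single (Fin.last k) 1) (Pi.single (Fin.last k) 1)).leadingBlock =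
      M.leadingBlock := by
  ext i j
  simp [vecMulVec_apply, Fin.castSucc_ne_last]

theorem schurLast_sub_smul_vecMulVec_single_last (u : R) :
    schurLast (M - u • vecMulVec (Pi.single (Fin.last k) 1) (Pi.single (Fin.last k) 1)) =
      schurLast M - u := by
  have hrow : lastRowInit (M - u • vecMulVec (Pi.single (Fin.last k) 1)
      (Pi.single (Fin.last k) 1)) = lastRowInit M := by
    funext j
    simp [lastRowInit, vecMulVec_apply, Fin.castSucc_ne_last]
  have hcol : lastColumnInit (M - u • vecMulVec (Pi.single (Fin.last k) 1)
      (Pi.single (Fin.last k) 1)) = lastColumnInit M := by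
    funext i
    simp [lastColumnInit, vecMulVec_apply, Fin.castSucc_ne_last]
  rw [schurLast, schurLast, leadingBlock_sub_smul_vecMulVec_single_last, hrow, hcol]
  simp only [sub_apply, smul_apply, vecMulVec_apply, Pi.single_eq_same, mul_one, smul_eq_mul]
  ring

end LastBlock

theorem inv_mulVec_last {K : Type*} [Field K] {k : ℕ} {M : Matrix (Fin (k + 1)) (Fin (k + 1)) K}
    (hM : IsUnit M.det) (h₁₁ : IsUnit M.leadingBlock.det) (hs : schurLast M ≠ 0)
    (w : Fin (k + 1) → K) :
    (M⁻¹ *ᵥ w) (Fin.last k) =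
      (w (Fin.last k) - lastRowInit M ⬝ᵥ (M.leadingBlock⁻¹ *ᵥ Fin.init w)) / schurLast M := by
  set t := (w (Fin.last k) - lastRowInit M ⬝ᵥ (M.leadingBlock⁻¹ *ᵥ Fin.init w)) / schurLast M
  have hv := mulVec_snoc_eq_snoc h₁₁ (Fin.init w) t
  rw [div_mul_cancel₀ _ hs, sub_add_cancel, Fin.snoc_init_self] at hv
  rw [← hv, mulVec_mulVec, nonsing_inv_mul _ hM, one_mulVec, Fin.snoc_last]

theorem inv_apply_last_last {K : Type*} [Field K] {k : ℕ}
    {M : Matrix (Fin (k + 1)) (Fin (k + 1)) K} (hM : IsUnit M.det)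
    (h₁₁ : IsUnit M.leadingBlock.det) (hs : schurLast M ≠ 0) :
    M⁻¹ (Fin.last k) (Fin.last k) = 1 / schurLast M := by
  have hinit : Fin.init (α := fun _ => K) (Pi.single (Fin.last k) 1) = 0 :=
    funext fun i => Pi.single_eq_of_ne (Fin.castSucc_ne_last i) 1
  have := inv_mulVec_last hM h₁₁ hs (Pi.single (Fin.last k) 1)
  rwa [mulVec_single_one, col_apply, hinit, mulVec_zero, dotProduct_zero, sub_zero,
    Pi.single_eq_same] at this

end Matrix

section LastBlock

variable {k : ℕ} {M : Matrix (Fin (k + 1)) (Fin (k + 1)) ℝ}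

theorem Metzler.lastRowInit_dotProduct_inv_mulVec_nonpos (hM : Metzler M)
    (h₁₁ : HurwitzStable M.leadingBlock) {w : Fin k → ℝ} (hw : ∀ i, 0 ≤ w i) :
    lastRowInit M ⬝ᵥ (M.leadingBlock⁻¹ *ᵥ w) ≤ 0 :=
  dotProduct_mulVec_nonpos (fun j => hM _ _ (Fin.castSucc_ne_last j).symm)
    ((hM.submatrix (Fin.castSucc_injective k)).inv_apply_nonpos_of_hurwitzStable h₁₁) hw

theorem Metzler.le_schurLast (hM : Metzler M) (h₁₁ : HurwitzStable M.leadingBlock) :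
    M (Fin.last k) (Fin.last k) ≤ M.schurLast :=
  le_sub_self_iff _ |>.2 <| hM.lastRowInit_dotProduct_inv_mulVec_nonpos h₁₁ fun i =>
    hM _ _ (Fin.castSucc_ne_last i)

theorem HurwitzStable.schurLast_ne_zero (h : HurwitzStable M)
    (h₁₁ : IsUnit M.leadingBlock.det) : M.schurLast ≠ 0 := by
  intro hs
  have hv := mulVec_snoc_eq_snoc h₁₁ 0 1
  rw [hs, mul_zero, zero_add, mulVec_zero, dotProduct_zero] at hv
  have hzero : (Fin.snoc 0 0 : Fin (k + 1) → ℝ) = 0 := by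
    ext i
    refine Fin.lastCases ?_ (fun i => ?_) i <;> simp
  have := congrFun (h.eq_zero_of_mulVec_eq_zero (hv.trans hzero)) (Fin.last k)
  simp at this

theorem Metzler.hurwitzStable_of_schurLast_neg (hM : Metzler M)
    (h₁₁ : HurwitzStable M.leadingBlock) (hs : M.schurLast < 0) : HurwitzStable M := by
  have hunit : IsUnit M.leadingBlock := (isUnit_iff_isUnit_det _).2 h₁₁.det_ne_zero.isUnit
  have hinv := (hM.submatrix (Fin.castSucc_injective k)).inv_apply_nonpos_of_hurwitzStable h₁₁
  set L := -(lastRowInit M ⬝ᵥ (M.leadingBlock⁻¹ *ᵥ 1))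
  have hL : 0 ≤ L :=
    neg_nonneg.2 (hM.lastRowInit_dotProduct_inv_mulVec_nonpos h₁₁ fun _ => zero_le_one)
  obtain ⟨ε, hε, hεL⟩ := exists_pos_mul_lt (neg_pos.2 hs) L
  -- `v = (-M₁₁⁻¹ (b + ε 1), 1) > 0` and `M v = (-ε 1, M.schurLast + ε L) < 0`
  have hMv := mulVec_snoc_eq_snoc ((isUnit_iff_isUnit_det _).1 hunit) (-ε • 1) 1
  refine hM.hurwitzStable_of_mulVec_neg
    (v := Fin.snoc (M.leadingBlock⁻¹ *ᵥ (-ε • 1 - (1 : ℝ) • lastColumnInit M)) 1)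
    (fun i => ?_) (fun i => ?_)
  · refine Fin.lastCases (by simp) (fun i => ?_) i
    rw [Fin.snoc_castSucc, ← neg_mulVec_neg]
    refine mulVec_apply_pos (fun i j => neg_nonneg.2 (hinv i j))
      (isUnit_nonsing_inv_iff.2 hunit).neg (fun j => ?_) i
    simp only [Pi.neg_apply, Pi.sub_apply, Pi.smul_apply, Pi.one_apply, smul_eq_mul]
    linarith [show 0 ≤ lastColumnInit M j from hM _ _ (Fin.castSucc_ne_last j)]
  · rw [hMv]
    refine Fin.lastCases ?_ (fun i => ?_) i
    · rw [Fin.snoc_last, mulVec_smul, dotProduct_smul, smul_eq_mul]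
      linarith
    · simpa using hε

end LastBlock

/-- Lemma 5 of the paper: for a Metzler, invertible, output unstable matrix A, the control
input u* is stabilizing (i.e. A − u* eₙeₙᵀ is Hurwitz stable) if and only if g₀ < 0. -/
theorem stmt14 (n : ℕ) (A : Matrix (Fin (n+2)) (Fin (n+2)) ℝ)
    (hMetz : Metzler A) (hInv : IsUnit A.det)
    (h11 : HurwitzStable (A.submatrix Fin.castSucc Fin.castSucc))
    (hnn : 0 < A (Fin.last (n+1)) (Fin.last (n+1)))
    (b₀ : Fin (n+2) → ℝ) (hb₀ : ∀ i, 0 ≤ b₀ i) (r : ℝ) (hr : 0 < r)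
    (g₀ gn u : ℝ)
    (hg₀ : g₀ = -((A⁻¹ *ᵥ b₀) (Fin.last (n+1))))
    (hgn : gn = -(A⁻¹ (Fin.last (n+1)) (Fin.last (n+1))))
    (hu : u = (g₀ - r) / (gn * r)) :
    HurwitzStable (A - u • Matrix.vecMulVec
        (Pi.single (Fin.last (n+1)) 1) (Pi.single (Fin.last (n+1)) 1)) ↔ g₀ < 0 := by
  have hdet₁₁ : IsUnit A.leadingBlock.det := h11.det_ne_zero.isUnit
  have hs : 0 < A.schurLast := hnn.trans_le (hMetz.le_schurLast h11)
  set K := b₀ (Fin.last (n+1)) - lastRowInit A ⬝ᵥ (A.leadingBlock⁻¹ *ᵥ Fin.init b₀)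
  have hK : 0 ≤ K := sub_nonneg.2 <|
    (hMetz.lastRowInit_dotProduct_inv_mulVec_nonpos h11 fun i => hb₀ _).trans (hb₀ _)
  rw [inv_mulVec_last hInv hdet₁₁ hs.ne'] at hg₀
  rw [inv_apply_last_last hInv hdet₁₁ hs.ne'] at hgn
  have hschur : (A - u • vecMulVec (Pi.single (Fin.last (n+1)) 1)
      (Pi.single (Fin.last (n+1)) 1)).schurLast = -(K / r) := by
    rw [schurLast_sub_smul_vecMulVec_single_last, hu, hg₀, hgn]
    field_simp
    ring
  rw [hg₀, neg_lt_zero, div_pos_iff_of_pos_right hs]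
  constructor
  · intro hH
    refine hK.lt_of_ne' fun hK0 => hH.schurLast_ne_zero ?_ ?_
    · rwa [leadingBlock_sub_smul_vecMulVec_single_last]
    · rw [hschur, hK0, zero_div, neg_zero]
  · intro hKpos
    refine (hMetz.sub_smul_vecMulVec_single u _).hurwitzStable_of_schurLast_neg ?_ ?_
    · rwa [leadingBlock_sub_smul_vecMulVec_single_last]
    · rw [hschur]
      exact neg_neg_of_pos (div_pos hKpos hr)
end
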